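/- Let G=(V,E) be a finite connected simple graph. Let x₁, …, x_k be a sequence of vertices such that, setting G₀ = G and G_{i+1} = G_i / x_{i+1} (where x_{i+1} is required to be a vertex of G_i), the final graph G_k has exactly one vertex. Then k ≥ R(G), where R(G) is the radius of G. -/

import Mathlib

open SimpleGraph

noncomputable def eccentr {V : Type} (G : SimpleGraph V) (x : V) : ℕ :=
  sSup (Set.range (G.dist x))

noncomputable def grRadius {V : Type} (G : SimpleGraph V) : ℕ :=
  sInf (Set.range (eccentr G))

def ncontract {V : Type} (G : SimpleGraph V) (x : V) :
    SimpleGraph {v : V // ¬ G.Adj x v} where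
  Adj a b := G.Adj a.1 b.1 ∨
    (a.1 = x ∧ b.1 ≠ x ∧ ∃ y, G.Adj x y ∧ G.Adj y b.1) ∨
    (b.1 = x ∧ a.1 ≠ x ∧ ∃ y, G.Adj x y ∧ G.Adj y a.1)
  symm := ⟨fun a b h => by
    rcases h with h | h | h
    · exact Or.inl h.symm
    · exact Or.inr (Or.inr h)
    · exact Or.inr (Or.inl h)⟩
  loopless := ⟨fun a h => by
    rcases h with h | ⟨h1, h2, -⟩ | ⟨h1, h2, -⟩
    · exact G.loopless.irrefl _ h
    · exact h2 h1
    · exact h2 h1⟩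

/-- `Reduces k W H` holds iff there is a sequence of `k` neighborhood contractions
`G₀ = H`, `Gᵢ₊₁ = Gᵢ / xᵢ₊₁` (each `xᵢ₊₁` a vertex of `Gᵢ`) such that the final
graph `Gₖ` has exactly one vertex. -/
def Reduces : (k : ℕ) → (W : Type) → SimpleGraph W → Prop
  | 0, W, _ => Nat.card W = 1
  | k + 1, W, H => ∃ x : W, Reduces k _ (ncontract H x)

/-!
Write `K = H / x` and `x̂` for the vertex `x` of `K`; `K` is `H` with the closed neighbourhood
`N[x]` collapsed to `x̂`. A `K`-walk avoiding `x̂` is an `H`-walk, and a `K`-walk ending at `x̂`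
lifts to an `H`-walk ending at `x` with at most one extra step. So a `K`-geodesic from `w` to
`b` either gives `d_H(w, b) ≤ d_K(w, b)` or passes through `x̂`, giving
`d_H(x, b) ≤ d_K(x̂, b) + 1`. If `w` is a centre of `K` of eccentricity `k`, the neighbour `c` of
`w` on an `H`-geodesic towards `x` has `d_H(c, x) ≤ d_K(w, x̂)`, and both cases give
`d_H(c, b) ≤ k + 1`. By induction, a graph reduced to one vertex in `k` moves has a vertex of
eccentricity at most `k`.
-/

lemma eccentr_le_of_forall_dist_le {V : Type} {G : SimpleGraph V} {c : V} {k : ℕ}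
    (h : ∀ v, G.dist c v ≤ k) : eccentr G c ≤ k :=
  csSup_le ⟨_, c, rfl⟩ (Set.forall_mem_range.mpr h)

lemma grRadius_le_eccentr {V : Type} (G : SimpleGraph V) (c : V) :
    grRadius G ≤ eccentr G c :=
  Nat.sInf_le ⟨c, rfl⟩

lemma SimpleGraph.Connected.exists_adj_dist_le_pred {V : Type} {G : SimpleGraph V}
    (hG : G.Connected) (w x : V) : ∃ c, G.dist w c ≤ 1 ∧ G.dist c x ≤ G.dist w x - 1 := by
  obtain ⟨p, hp⟩ := hG.exists_walk_length_eq_dist w x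
  cases p with
  | nil => exact ⟨w, by simp⟩
  | @cons _ c _ h q =>
    refine ⟨c, (dist_eq_one_iff_adj.mpr h).le, ?_⟩
    rw [← hp, Walk.length_cons]
    exact dist_le q

namespace ncontract

variable {V : Type} {H : SimpleGraph V} {x : V}

variable (H x) in
def self : {v : V // ¬ H.Adj x v} := ⟨x, H.loopless.irrefl x⟩

open Classical in
variable (H x) in
noncomputable def proj (v : V) : {v : V // ¬ H.Adj x v} :=
  if h : H.Adj x v then self H x else ⟨v, h⟩

lemma val_ne_of_ne_self {a : {v : V // ¬ H.Adj x v}} (h : a ≠ self H x) : a.1 ≠ x :=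
  fun h' => h (Subtype.ext h')

lemma adj_of_ne_self {a b : {v : V // ¬ H.Adj x v}} (ha : a ≠ self H x) (hb : b ≠ self H x)
    (h : (ncontract H x).Adj a b) : H.Adj a.1 b.1 := by
  rcases h with h | ⟨h, -, -⟩ | ⟨h, -, -⟩
  · exact h
  · exact absurd h (val_ne_of_ne_self ha)
  · exact absurd h (val_ne_of_ne_self hb)

lemma exists_adj_adj_of_adj_self {b : {v : V // ¬ H.Adj x v}}
    (h : (ncontract H x).Adj (self H x) b) : ∃ y, H.Adj x y ∧ H.Adj y b.1 := by
  rcases h with h | ⟨-, -, hy⟩ | ⟨-, hne, -⟩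
  · exact absurd h b.2
  · exact hy
  · exact absurd rfl hne

lemma reachable_self_of_adj {u v : V} (hu : H.Adj x u) (hv : ¬ H.Adj x v) (huv : H.Adj u v) :
    (ncontract H x).Reachable (self H x) ⟨v, hv⟩ := by
  by_cases hvx : v = x
  · subst hvx
    rfl
  · exact Adj.reachable (Or.inr (Or.inl ⟨rfl, hvx, u, hu, huv⟩))

lemma reachable_proj_of_adj {u v : V} (huv : H.Adj u v) :
    (ncontract H x).Reachable (proj H x u) (proj H x v) := by
  unfold proj
  split_ifs with hu hv hv
  · rfl
  · exact reachable_self_of_adj hu hv huv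
  · exact (reachable_self_of_adj hv hu huv.symm).symm
  · exact Adj.reachable (Or.inl huv)

lemma reachable_proj {u v : V} (h : H.Reachable u v) :
    (ncontract H x).Reachable (proj H x u) (proj H x v) := by
  obtain ⟨p⟩ := h
  induction p with
  | nil => rfl
  | cons h _ ih => exact (reachable_proj_of_adj h).trans ih

lemma proj_val (a : {v : V // ¬ H.Adj x v}) : proj H x a.1 = a :=
  dif_neg a.2

theorem connected (hH : H.Connected) : (ncontract H x).Connected :=
  connected_iff_exists_forall_reachable _ |>.mpr
    ⟨self H x, fun b => by
      simpa only [proj_val] using reachable_proj (x := x) (hH (self H x).1 b.1)⟩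

lemma exists_walk_of_self_notMem_support {a b : {v : V // ¬ H.Adj x v}}
    (p : (ncontract H x).Walk a b) (hp : self H x ∉ p.support) :
    ∃ q : H.Walk a.1 b.1, q.length = p.length := by
  induction p with
  | nil => exact ⟨Walk.nil, rfl⟩
  | cons h p ih =>
    rw [Walk.support_cons, List.mem_cons, not_or] at hp
    obtain ⟨q, hq⟩ := ih hp.2
    have hc : _ ≠ self H x := fun h' => hp.2 (h' ▸ p.start_mem_support)
    exact ⟨Walk.cons (adj_of_ne_self (Ne.symm hp.1) hc h) q, by simp [hq]⟩

lemma dist_val_le_length_add_one (hH : H.Connected) {a b : {v : V // ¬ H.Adj x v}}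
    (p : (ncontract H x).Walk a b) (hb : b = self H x) : H.dist a.1 x ≤ p.length + 1 := by
  induction p with
  | nil => simp [hb, self]
  | @cons a c b h p ih =>
    rw [Walk.length_cons]
    by_cases ha : a = self H x
    · simp [ha, self]
    by_cases hc : c = self H x
    · subst hc
      obtain ⟨y, hxy, hya⟩ := exists_adj_adj_of_adj_self h.symm
      have := dist_le (Walk.cons hya.symm (Walk.cons hxy.symm Walk.nil))
      simp only [Walk.length_cons, Walk.length_nil] at this
      omega
    · calc H.dist a.1 x ≤ H.dist a.1 c.1 + H.dist c.1 x := hH.dist_triangle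
        _ ≤ 1 + (p.length + 1) :=
          add_le_add (dist_eq_one_iff_adj.mpr (adj_of_ne_self ha hc h)).le (ih hb)
        _ = p.length + 1 + 1 := by ring

lemma dist_val_le_dist_self_add_one (hH : H.Connected) (a : {v : V // ¬ H.Adj x v}) :
    H.dist a.1 x ≤ (ncontract H x).dist a (self H x) + 1 := by
  obtain ⟨p, hp⟩ := (connected hH).exists_walk_length_eq_dist a (self H x)
  exact hp ▸ dist_val_le_length_add_one hH p rfl

lemma dist_val_le_or_dist_self_add_dist_self_le (hH : H.Connected)
    (a b : {v : V // ¬ H.Adj x v}) :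
    H.dist a.1 b.1 ≤ (ncontract H x).dist a b ∨
      (ncontract H x).dist a (self H x) + (ncontract H x).dist (self H x) b ≤
        (ncontract H x).dist a b := by
  classical
  obtain ⟨p, hp⟩ := (connected hH).exists_walk_length_eq_dist a b
  rw [← hp]
  by_cases hs : self H x ∈ p.support
  · right
    have hsplit := congrArg Walk.length (p.take_spec hs)
    rw [Walk.length_append] at hsplit
    rw [← hsplit]
    exact add_le_add (dist_le _) (dist_le _)
  · left
    obtain ⟨q, hq⟩ := exists_walk_of_self_notMem_support p hs
    exact hq ▸ dist_le q

theorem exists_forall_dist_le_succ (hH : H.Connected) {k : ℕ} (w : {v : V // ¬ H.Adj x v})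
    (hw : ∀ b, (ncontract H x).dist w b ≤ k) : ∃ c, ∀ v, H.dist c v ≤ k + 1 := by
  obtain ⟨c, hwc, hcx⟩ := hH.exists_adj_dist_le_pred w.1 x
  have hcx' : H.dist c x ≤ (ncontract H x).dist w (self H x) := by
    have := dist_val_le_dist_self_add_one hH w
    omega
  refine ⟨c, fun v => ?_⟩
  by_cases hv : H.Adj x v
  · calc H.dist c v ≤ H.dist c x + H.dist x v := hH.dist_triangle
      _ ≤ k + 1 := add_le_add (hcx'.trans (hw _)) (dist_eq_one_iff_adj.mpr hv).le
  rcases dist_val_le_or_dist_self_add_dist_self_le hH w ⟨v, hv⟩ with hwv | hwv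
  · calc H.dist c v ≤ H.dist c w.1 + H.dist w.1 v := hH.dist_triangle
      _ ≤ 1 + k := add_le_add (SimpleGraph.dist_comm ▸ hwc) (hwv.trans (hw _))
      _ = k + 1 := add_comm _ _
  · have hxv : H.dist x v ≤ (ncontract H x).dist (self H x) ⟨v, hv⟩ + 1 := by
      rw [SimpleGraph.dist_comm, SimpleGraph.dist_comm (G := ncontract H x)]
      exact dist_val_le_dist_self_add_one hH ⟨v, hv⟩
    have := hw ⟨v, hv⟩
    calc H.dist c v ≤ H.dist c x + H.dist x v := hH.dist_triangle
      _ ≤ k + 1 := by omega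

end ncontract

theorem Reduces.exists_forall_dist_le {k : ℕ} :
    ∀ {W : Type} {H : SimpleGraph W}, H.Connected → Reduces k W H →
      ∃ c, ∀ v, H.dist c v ≤ k := by
  induction k with
  | zero =>
    intro W H _ h
    obtain ⟨_, ⟨c⟩⟩ := Nat.card_eq_one_iff_unique.mp h
    exact ⟨c, fun v => by simp [Subsingleton.elim v c]⟩
  | succ k ih =>
    rintro W H hH ⟨x, h⟩
    obtain ⟨w, hw⟩ := ih (ncontract.connected hH) h
    exact ncontract.exists_forall_dist_le_succ hH w hw

theorem stmt_12_general {V : Type} (G : SimpleGraph V) (hconn : G.Connected)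
    (k : ℕ) (h : Reduces k V G) :
    grRadius G ≤ k := by
  obtain ⟨c, hc⟩ := h.exists_forall_dist_le hconn
  exact (grRadius_le_eccentr G c).trans (eccentr_le_of_forall_dist_le hc)

theorem stmt_12 {V : Type} [Fintype V] (G : SimpleGraph V) (hconn : G.Connected)
    (k : ℕ) (h : Reduces k V G) :
    grRadius G ≤ k :=
  stmt_12_general G hconn k h
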